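/- Under the setting of sum-aggregation pooling with cluster assignment matrices that are right stochastic up to λ > 0: if the total feature sums differ, ∑_{i=1}^{N} s₁(i) ≠ ∑_{i=1}^{N} s₂(i), then for every permutation π of the K supernodes there exists some j with p₁(j) ≠ p₂(π(j)); i.e., the pooled feature multisets {p₁(j)} and {p₂(j)} are distinct as multisets. -/
import Mathlib


/-- distinct total feature sums give pooled feature multisets that differ
under every permutation. -/
theorem stmt_2 {N K f : ℕ} (lam : ℝ) (hlam : 0 < lam)
    (s₁ s₂ : Fin N → (Fin f → ℝ)) (C₁ C₂ : Fin N → Fin K → ℝ)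
    (hC₁ : ∀ i, ∑ j, C₁ i j = lam) (hC₂ : ∀ i, ∑ j, C₂ i j = lam)
    (p₁ p₂ : Fin K → (Fin f → ℝ))
    (hp₁ : ∀ j, p₁ j = ∑ i, C₁ i j • s₁ i)
    (hp₂ : ∀ j, p₂ j = ∑ i, C₂ i j • s₂ i)
    (hs : ∑ i, s₁ i ≠ ∑ i, s₂ i) :
    ∀ π : Equiv.Perm (Fin K), ∃ j, p₁ j ≠ p₂ (π j) := by
  intro π
  by_contra h
  push_neg at h
  apply hs
  have h1 : ∑ j, p₁ j = lam • ∑ i, s₁ i := by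
    simp only [hp₁]
    rw [Finset.sum_comm, Finset.smul_sum]
    exact Finset.sum_congr rfl fun i _ => by
      rw [← Finset.sum_smul, hC₁]
  have h2 : ∑ j, p₂ j = lam • ∑ i, s₂ i := by
    simp only [hp₂]
    rw [Finset.sum_comm, Finset.smul_sum]
    exact Finset.sum_congr rfl fun i _ => by
      rw [← Finset.sum_smul, hC₂]
  have h3 : ∑ j, p₁ j = ∑ j, p₂ j := by
    rw [show ∑ j, p₁ j = ∑ j, p₂ (π j) from Finset.sum_congr rfl fun j _ => h j,
      Equiv.sum_comp π p₂]
  rw [h1, h2] at h3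
  exact smul_right_injective _ (ne_of_gt hlam) h3
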